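/- Let (M_k)_{k≥1} be invertible real n×n matrices, (Ω_k)_{k≥0} real symmetric positive semi-definite n×n matrices, and suppose P_0 = WG⁻¹Wᵀ, where W is a real n×r matrix and G is a real symmetric positive definite r×r matrix. Define P_{k+1} = M_{k+1}(I + P_kΩ_k)⁻¹P_kM_{k+1}ᵀ, M_{l:0} = M_l⋯M_1, and Θ_k = Σ_{l=0}^{k−1} M_{l:0}ᵀΩ_lM_{l:0}. Then for every k ≥ 0 the r×r matrix G + WᵀΘ_kW is invertible and P_k = M_{k:0}W(G + WᵀΘ_kW)⁻¹WᵀM_{k:0}ᵀ. -/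

import Mathlib

open Matrix

/-!
Induction on `k`. If `P_k = A S⁻¹ Aᵀ` with `A = M_{k:0} W` and `S = G + Wᵀ Θ_k W`, the
push-through identity `(1 + A S⁻¹ Aᵀ Ω)⁻¹ A S⁻¹ = A (S + Aᵀ Ω A)⁻¹` turns the Kalman update into
the same form with `S` replaced by `S + Aᵀ Ω_k A = G + Wᵀ Θ_{k+1} W`. Every such `S` is positive
definite because `Θ_k` is positive semi-definite, and `1 + A S⁻¹ Aᵀ Ω` is invertible because, by
the Weinstein–Aronszajn identity, its determinant is `det S⁻¹ * det (S + Aᵀ Ω A)`.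
-/

/-- `Mres M l j` is the resolvent `M_{(l+j):l} = M_{l+j} ⋯ M_{l+1}`, so that
`M_{l:0} = Mres M 0 l` and `M_{0:0} = 1`. -/
def Mres {n : ℕ} (M : ℕ → Matrix (Fin n) (Fin n) ℝ) (l : ℕ) :
    ℕ → Matrix (Fin n) (Fin n) ℝ
  | 0 => 1
  | j + 1 => M (l + j + 1) * Mres M l j

/-- The observability matrix pulled back to initial time:
`Θ_k = Σ_{l=0}^{k-1} M_{l:0}ᵀ * Ω_l * M_{l:0}`. -/
noncomputable def Theta {n : ℕ} (M Ω : ℕ → Matrix (Fin n) (Fin n) ℝ) (k : ℕ) :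
    Matrix (Fin n) (Fin n) ℝ :=
  ∑ l ∈ Finset.range k, (Mres M 0 l)ᵀ * Ω l * Mres M 0 l

namespace Matrix

variable {K : Type*} [Field K] {m r : Type*} [Fintype m] [Fintype r] [DecidableEq m]
  [DecidableEq r]

theorem one_add_mul_inv_mul_mul {A : Matrix m r K} {B : Matrix r m K} {S : Matrix r r K}
    (hS : IsUnit S) : (1 + A * S⁻¹ * B) * A = A * S⁻¹ * (S + B * A) := by
  rw [Matrix.add_mul, Matrix.one_mul, Matrix.mul_add,
    nonsing_inv_mul_cancel_right _ _ ((isUnit_iff_isUnit_det S).mp hS)]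
  simp only [Matrix.mul_assoc]

theorem isUnit_one_add_mul_inv_mul {A : Matrix m r K} {B : Matrix r m K} {S : Matrix r r K}
    (hS : IsUnit S) (hSBA : IsUnit (S + B * A)) : IsUnit (1 + A * S⁻¹ * B) := by
  have hfactor : 1 + S⁻¹ * B * A = S⁻¹ * (S + B * A) := by
    rw [Matrix.mul_add, nonsing_inv_mul _ ((isUnit_iff_isUnit_det S).mp hS), Matrix.mul_assoc]
  rw [isUnit_iff_isUnit_det, Matrix.mul_assoc A, det_one_add_mul_comm, hfactor, det_mul]
  exact (isUnit_nonsing_inv_det _ ((isUnit_iff_isUnit_det S).mp hS)).mul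
    ((isUnit_iff_isUnit_det _).mp hSBA)

theorem inv_one_add_mul_inv_mul_mul {A : Matrix m r K} {B : Matrix r m K} {S : Matrix r r K}
    (hS : IsUnit S) (hSBA : IsUnit (S + B * A)) :
    (1 + A * S⁻¹ * B)⁻¹ * (A * S⁻¹) = A * (S + B * A)⁻¹ := by
  have hX := (isUnit_iff_isUnit_det _).mp (isUnit_one_add_mul_inv_mul hS hSBA)
  calc (1 + A * S⁻¹ * B)⁻¹ * (A * S⁻¹)
      = (1 + A * S⁻¹ * B)⁻¹ * ((1 + A * S⁻¹ * B) * (A * (S + B * A)⁻¹)) := by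
        rw [← Matrix.mul_assoc (1 + A * S⁻¹ * B), one_add_mul_inv_mul_mul hS,
          mul_nonsing_inv_cancel_right _ _ ((isUnit_iff_isUnit_det _).mp hSBA)]
    _ = A * (S + B * A)⁻¹ := nonsing_inv_mul_cancel_left _ _ hX

theorem mul_inv_one_add_mul_mul_transpose {F : Matrix m m K} {A : Matrix m r K}
    {Q : Matrix m m K} {S : Matrix r r K} (hS : IsUnit S) (hSQ : IsUnit (S + Aᵀ * Q * A)) :
    F * (1 + A * S⁻¹ * Aᵀ * Q)⁻¹ * (A * S⁻¹ * Aᵀ) * Fᵀ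
      = F * A * (S + Aᵀ * Q * A)⁻¹ * (F * A)ᵀ := by
  have h : (1 + A * S⁻¹ * Aᵀ * Q)⁻¹ * (A * S⁻¹) = A * (S + Aᵀ * Q * A)⁻¹ := by
    simpa only [Matrix.mul_assoc] using inv_one_add_mul_inv_mul_mul (B := Aᵀ * Q) hS hSQ
  rw [Matrix.mul_assoc F, ← Matrix.mul_assoc _ _ Aᵀ, h, transpose_mul]
  simp only [Matrix.mul_assoc]

end Matrix

section

variable {n : ℕ} (M Ω : ℕ → Matrix (Fin n) (Fin n) ℝ)

theorem Mres_zero_succ (k : ℕ) : Mres M 0 (k + 1) = M (k + 1) * Mres M 0 k := by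
  rw [Mres, zero_add]

theorem Theta_succ (k : ℕ) :
    Theta M Ω (k + 1) = Theta M Ω k + (Mres M 0 k)ᵀ * Ω k * Mres M 0 k :=
  Finset.sum_range_succ _ _

variable {M Ω}

theorem posSemidef_Theta (hΩ : ∀ l, (Ω l).PosSemidef) (k : ℕ) : (Theta M Ω k).PosSemidef :=
  posSemidef_sum _ fun l _ => by simpa using (hΩ l).conjTranspose_mul_mul_same (Mres M 0 l)

end

theorem kf_factorized_closed_form_general {n r : ℕ}
    (M Ω : ℕ → Matrix (Fin n) (Fin n) ℝ)
    (hΩ : ∀ k, (Ω k).PosSemidef)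
    (W : Matrix (Fin n) (Fin r) ℝ) (G : Matrix (Fin r) (Fin r) ℝ)
    (hG : G.PosDef)
    (P : ℕ → Matrix (Fin n) (Fin n) ℝ) (hP0 : P 0 = W * G⁻¹ * Wᵀ)
    (hrec : ∀ k, P (k + 1)
      = M (k + 1) * (1 + P k * Ω k)⁻¹ * P k * (M (k + 1))ᵀ) :
    ∀ k, IsUnit (G + Wᵀ * Theta M Ω k * W) ∧
      P k = Mres M 0 k * W * (G + Wᵀ * Theta M Ω k * W)⁻¹ * Wᵀ * (Mres M 0 k)ᵀ := by
  have hS : ∀ k, (G + Wᵀ * Theta M Ω k * W).PosDef := fun k =>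
    hG.add_posSemidef (by simpa using (posSemidef_Theta hΩ k).conjTranspose_mul_mul_same W)
  refine fun k => ⟨(hS k).isUnit, ?_⟩
  induction k with
  | zero => simpa [Theta, Mres] using hP0
  | succ k ih =>
    set A := Mres M 0 k * W
    have hS_succ : G + Wᵀ * Theta M Ω (k + 1) * W
        = G + Wᵀ * Theta M Ω k * W + Aᵀ * Ω k * A := by
      simp only [Theta_succ, A, transpose_mul, Matrix.mul_add, Matrix.add_mul, Matrix.mul_assoc,
        add_assoc]
    have hPk : P k = A * (G + Wᵀ * Theta M Ω k * W)⁻¹ * Aᵀ := by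
      simp only [ih, A, transpose_mul, Matrix.mul_assoc]
    rw [hrec k, hPk, hS_succ, mul_inv_one_add_mul_mul_transpose (hS k).isUnit
      (hS_succ ▸ (hS (k + 1)).isUnit), Mres_zero_succ]
    simp only [A, transpose_mul, Matrix.mul_assoc]

/-- Factorized closed form of the perfect-model Kalman filter covariance when
`P_0 = W G⁻¹ Wᵀ` with `G` positive definite: for all `k`, the `r × r` matrix
`G + Wᵀ Θ_k W` is invertible and
`P_k = M_{k:0} W (G + Wᵀ Θ_k W)⁻¹ Wᵀ M_{k:0}ᵀ`. -/
theorem kf_factorized_closed_form {n r : ℕ}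
    (M Ω : ℕ → Matrix (Fin n) (Fin n) ℝ)
    (hM : ∀ k, 1 ≤ k → IsUnit (M k)) (hΩ : ∀ k, (Ω k).PosSemidef)
    (W : Matrix (Fin n) (Fin r) ℝ) (G : Matrix (Fin r) (Fin r) ℝ)
    (hG : G.PosDef)
    (P : ℕ → Matrix (Fin n) (Fin n) ℝ) (hP0 : P 0 = W * G⁻¹ * Wᵀ)
    (hrec : ∀ k, P (k + 1)
      = M (k + 1) * (1 + P k * Ω k)⁻¹ * P k * (M (k + 1))ᵀ) :
    ∀ k, IsUnit (G + Wᵀ * Theta M Ω k * W) ∧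
      P k = Mres M 0 k * W * (G + Wᵀ * Theta M Ω k * W)⁻¹ * Wᵀ * (Mres M 0 k)ᵀ :=
  kf_factorized_closed_form_general M Ω hΩ W G hG P hP0 hrec
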